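/- If u is coprime to N and c ≡ N (mod 2), then the modulus of the sum of one period of a Zadoff–Chu sequence equals √N: |Σ_{n=0}^{N-1} exp(-iπ u n(n+c)/N)| = √N. -/

import Mathlib

/-!
Write `f n = exp (-π i u n (n + c) / N)`. Since `N + c` is even, `f` is `N`-periodic, hence a
function on `ZMod N`, and it is "quadratic": `f (a + b) = ψ (a b) f a f b` for the additive
character `ψ x = exp (-2π i u x / N)`, which is primitive because `u` is a unit mod `N`.
Then `|∑ f|² = ∑ₖ ∑_y f (y + k) conj (f y) = ∑ₖ f k ∑_y ψ (y k)`, and by primitivity only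
`k = 0` survives, contributing `N`.
-/

open Complex Finset ComplexConjugate

theorem AddChar.IsPrimitive.mulShift_of_isUnit {R R' : Type*} [CommRing R] [CommMonoid R']
    {ψ : AddChar R R'} (hψ : ψ.IsPrimitive) {r : R} (hr : IsUnit r) :
    (ψ.mulShift r).IsPrimitive := fun a ha => by
  rw [AddChar.mulShift_mulShift]
  exact hψ (hr.mul_right_eq_zero.not.mpr ha)

theorem Function.Periodic.apply_val_intCast {M : Type*} {N : ℕ} [NeZero N] {g : ℤ → M}
    (hg : Function.Periodic g N) (a : ℤ) : g ((a : ZMod N).val) = g a := by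
  rw [ZMod.val_intCast, Int.emod_def, mul_comm]
  simpa using hg.sub_int_mul_eq (x := a) (a / N)

theorem ZMod.sum_val_eq_sum_range {M : Type*} [AddCommMonoid M] (N : ℕ) [NeZero N]
    (g : ℕ → M) : ∑ x : ZMod N, g x.val = ∑ n ∈ range N, g n := by
  obtain ⟨n, rfl⟩ := Nat.exists_eq_succ_of_ne_zero (NeZero.ne N)
  exact Fin.sum_univ_eq_sum_range g (n + 1)

theorem mul_conj_sum_eq_sum_sum_add {G : Type*} [AddCommGroup G] [Fintype G] (f : G → ℂ) :
    (∑ x, f x) * conj (∑ x, f x) = ∑ y, ∑ k, f (y + k) * conj (f y) := by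
  rw [map_sum, Finset.sum_mul_sum, Finset.sum_comm]
  exact Fintype.sum_congr _ _ fun y =>
    (Fintype.sum_equiv (Equiv.addLeft y) _ _ fun k => rfl).symm

theorem norm_sum_eq_sqrt_card_of_map_add {R : Type*} [CommRing R] [Fintype R]
    {ψ : AddChar R ℂ} (hψ : ψ.IsPrimitive) {f : R → ℂ} (hf_norm : ∀ x, ‖f x‖ = 1)
    (hf_add : ∀ a b, f (a + b) = ψ (a * b) * f a * f b) :
    ‖∑ x, f x‖ = √(Fintype.card R) := by
  classical
  have hf_conj : ∀ x, f x * conj (f x) = 1 := fun x => by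
    rw [mul_conj', hf_norm, ofReal_one, one_pow]
  have hf_zero : f 0 = 1 := by
    have h := hf_add 0 0
    rw [add_zero, mul_zero, AddChar.map_zero_eq_one, one_mul] at h
    have h0 : f 0 ≠ 0 := fun h0 => by simpa [h0] using hf_norm 0
    exact mul_left_cancel₀ h0 (h.symm.trans (mul_one _).symm)
  have hsq : (‖∑ x, f x‖ : ℂ) ^ 2 = Fintype.card R := by
    calc (‖∑ x, f x‖ : ℂ) ^ 2 = ∑ k, ∑ y, f (y + k) * conj (f y) := by
          rw [← mul_conj', mul_conj_sum_eq_sum_sum_add, Finset.sum_comm]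
      _ = ∑ k, (∑ y, ψ (y * k)) * f k := by
          refine Fintype.sum_congr _ _ fun k => ?_
          rw [Finset.sum_mul]
          refine Fintype.sum_congr _ _ fun y => ?_
          rw [hf_add, mul_right_comm _ (f k), mul_assoc _ (f y), hf_conj, mul_one]
      _ = Fintype.card R := by
          rw [Fintype.sum_eq_single 0 fun k hk => by
              rw [AddChar.sum_mulShift k hψ, if_neg hk, Nat.cast_zero, zero_mul],
            AddChar.sum_mulShift 0 hψ, if_pos rfl, hf_zero, mul_one]
  rw [← Real.sqrt_sq (norm_nonneg _)]
  exact congrArg Real.sqrt (by exact_mod_cast hsq)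

noncomputable def zadoffChu (N : ℕ) (u c n : ℤ) : ℂ :=
  exp (-((Real.pi : ℂ) * u * n * (n + c) / N) * I)

theorem norm_zadoffChu (N : ℕ) (u c n : ℤ) : ‖zadoffChu N u c n‖ = 1 := by
  rw [zadoffChu, norm_exp]
  simp

theorem zadoffChu_add (N : ℕ) [NeZero N] (u c a b : ℤ) :
    zadoffChu N u c (a + b) =
      ZMod.stdAddChar ((-u * a * b : ℤ) : ZMod N) * zadoffChu N u c a * zadoffChu N u c b := by
  have hN : (N : ℂ) ≠ 0 := NeZero.ne _
  rw [ZMod.stdAddChar_coe, zadoffChu, zadoffChu, zadoffChu, ← exp_add, ← exp_add]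
  congr 1
  push_cast
  field_simp
  ring

theorem zadoffChu_periodic (N : ℕ) [NeZero N] (u c : ℤ) (hc : Even ((N : ℤ) + c)) :
    Function.Periodic (zadoffChu N u c) N := fun a => by
  obtain ⟨t, ht⟩ := hc
  have hN : (N : ℂ) ≠ 0 := NeZero.ne _
  have hNc : ((N : ℤ) : ℂ) + c = t + t := by exact_mod_cast ht
  have hperiod : zadoffChu N u c N = 1 := by
    rw [zadoffChu, ← exp_int_mul_two_pi_mul_I (-(u * t))]
    congr 1
    push_cast at hNc ⊢
    rw [mul_assoc _ (N : ℂ), hNc]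
    field_simp
    ring
  rw [zadoffChu_add, hperiod, mul_one]
  simp

/-- The modulus of the sum of one period of a Zadoff–Chu sequence equals `√N`. -/
theorem zc_sum_abs (N : ℕ) (hN : 1 ≤ N) (u c : ℤ) (hu : Int.gcd u (N : ℤ) = 1)
    (hc : c % 2 = (N : ℤ) % 2) :
    ‖∑ n ∈ Finset.range N,
        Complex.exp (-((Real.pi : ℂ) * u * (n : ℂ) * ((n : ℂ) + c) / N) * Complex.I)‖
      = Real.sqrt N := by
  have : NeZero N := ⟨by omega⟩
  have hper : Function.Periodic (zadoffChu N u c) N :=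
    zadoffChu_periodic N u c (Int.even_iff.mpr (by omega))
  have hunit : IsUnit (-u : ZMod N) := by
    refine ((ZMod.coe_int_isUnit_iff_isCoprime u N).mpr ?_).neg
    rwa [Int.isCoprime_iff_gcd_eq_one, Int.gcd_comm]
  have hsum : ∑ n ∈ range N, exp (-((Real.pi : ℂ) * u * (n : ℂ) * ((n : ℂ) + c) / N) * I) =
      ∑ x : ZMod N, zadoffChu N u c x.val := by
    rw [ZMod.sum_val_eq_sum_range N fun n => zadoffChu N u c n]
    simp [zadoffChu]
  rw [hsum, norm_sum_eq_sqrt_card_of_map_add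
    ((ZMod.isPrimitive_stdAddChar N).mulShift_of_isUnit hunit)
    (fun x => norm_zadoffChu N u c x.val) (fun a b => ?_), ZMod.card]
  have hval : zadoffChu N u c (a + b).val = zadoffChu N u c (a.val + b.val) := by
    rw [← hper.apply_val_intCast ((a.val : ℤ) + b.val)]
    simp only [Int.cast_add, Int.cast_natCast, ZMod.natCast_zmod_val]
  rw [hval, zadoffChu_add, AddChar.mulShift_apply]
  push_cast
  simp [mul_assoc]
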